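/- Fix β ∈ (0,1) and τ_Q > 0, and take σ_Z = 0, so that for α ∈ (0,1), σ_α = √(α² + (1−α)²) and c(α) = αβ + (1−α)(1−β). Then both the mean admitted quality q(α) = (c(α)/σ_α)·H(τ_Q σ_α / c(α)) and the admitted fraction n(α) = 1 − Φ(τ_Q σ_α / c(α)) are strictly increasing for α ∈ (0,β) and strictly decreasing for α ∈ (β,1); in particular both attain their maximum over (0,1) at α = β. -/

import Mathlib

/-!
Write `r(α) = c(α)/σ_α`. Both quantities are functions of `r` alone, `q = r·H(τ_Q/r)` and
`n = 1 - Φ(τ_Q/r)`, and both are strictly increasing in `r > 0`: for `n` because `Φ` is, for `q`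
because `x ↦ H(x)/x` is strictly decreasing on `x > 0`, which comes down to the Mills-type bound
`x H(x) < x² + 1`. On the other hand `r(α)` is the inner product of the unit vector along
`(α, 1-α)` with `(β, 1-β)`, and `r'(α) = (β - α)/σ_α³`, so `r` increases up to `α = β` and
decreases after it.
-/

open MeasureTheory Real Set Filter

/-- Standard normal pdf. -/
noncomputable def phi (x : ℝ) : ℝ := Real.exp (-x ^ 2 / 2) / Real.sqrt (2 * Real.pi)

/-- Standard normal cdf. -/
noncomputable def Phi (x : ℝ) : ℝ := ∫ y in Set.Iic x, phi y

/-- Standard normal hazard rate. -/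
noncomputable def Haz (x : ℝ) : ℝ := phi x / (1 - Phi x)

open Topology ProbabilityTheory

lemma phi_eq_gaussianPDFReal : phi = gaussianPDFReal 0 1 := by
  ext x
  simp [phi, gaussianPDFReal, div_eq_inv_mul]

lemma phi_pos (x : ℝ) : 0 < phi x := by
  rw [phi_eq_gaussianPDFReal]
  exact gaussianPDFReal_pos 0 1 x one_ne_zero

lemma integrable_phi : Integrable phi := by
  rw [phi_eq_gaussianPDFReal]
  exact integrable_gaussianPDFReal 0 1

lemma integral_phi : ∫ x, phi x = 1 := by
  rw [phi_eq_gaussianPDFReal]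
  exact integral_gaussianPDFReal_eq_one 0 one_ne_zero

lemma continuous_phi : Continuous phi := by
  unfold phi
  fun_prop

lemma hasDerivAt_phi (x : ℝ) : HasDerivAt phi (-x * phi x) x := by
  have h : HasDerivAt (fun y : ℝ => -y ^ 2 / 2) (-x) x :=
    ((hasDerivAt_pow 2 x).fun_neg.div_const 2).congr_deriv (by norm_num; ring)
  exact (h.exp.div_const √(2 * π)).congr_deriv (by simp only [phi]; ring)

lemma tendsto_phi_atTop : Tendsto phi atTop (𝓝 0) := by
  have h : Tendsto (fun y : ℝ => -y ^ 2 / 2) atTop atBot := by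
    have := tendsto_neg_atTop_atBot.comp
      ((tendsto_pow_atTop (α := ℝ) two_ne_zero).atTop_div_const two_pos)
    exact this.congr fun y => by simp [neg_div]
  have := (tendsto_exp_atBot.comp h).div_const √(2 * π)
  rwa [zero_div] at this

lemma Phi_sub_Phi (a b : ℝ) : Phi b - Phi a = ∫ x in a..b, phi x :=
  intervalIntegral.integral_Iic_sub_Iic integrable_phi.integrableOn integrable_phi.integrableOn

lemma hasDerivAt_Phi (x : ℝ) : HasDerivAt Phi (phi x) x := by
  have h := (intervalIntegral.integral_hasDerivAt_right integrable_phi.intervalIntegrable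
    continuous_phi.stronglyMeasurable.stronglyMeasurableAtFilter
    continuous_phi.continuousAt (a := 0) (b := x)).const_add (Phi 0)
  refine h.congr_of_eventuallyEq (Eventually.of_forall fun u => ?_)
  simp only [← Phi_sub_Phi, add_sub_cancel]

lemma strictMono_Phi : StrictMono Phi :=
  strictMono_of_hasDerivAt_pos hasDerivAt_Phi phi_pos

lemma tendsto_Phi_atTop : Tendsto Phi atTop (𝓝 1) := by
  have h := tendsto_setIntegral_of_monotone (μ := volume) (f := phi)
    (fun r => measurableSet_Iic) (fun r r' h => Iic_subset_Iic.2 h)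
    (by rw [iUnion_Iic]; exact integrable_phi.integrableOn)
  rwa [iUnion_Iic, Measure.restrict_univ, integral_phi] at h

lemma Phi_lt_one (x : ℝ) : Phi x < 1 :=
  (strictMono_Phi (lt_add_one x)).trans_le
    (strictMono_Phi.monotone.ge_of_tendsto tendsto_Phi_atTop (x + 1))

lemma Haz_pos (x : ℝ) : 0 < Haz x :=
  div_pos (phi_pos x) (sub_pos.2 (Phi_lt_one x))

lemma hasDerivAt_Haz (x : ℝ) : HasDerivAt Haz (Haz x * (Haz x - x)) x := by
  have hne : 1 - Phi x ≠ 0 := (sub_pos.2 (Phi_lt_one x)).ne'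
  refine ((hasDerivAt_phi x).div
    ((hasDerivAt_const x 1).sub (hasDerivAt_Phi x)) hne).congr_deriv ?_
  simp only [Haz, Pi.sub_apply]
  field_simp
  ring

lemma tendsto_mul_phi_div_atTop : Tendsto (fun x => x * phi x / (x ^ 2 + 1)) atTop (𝓝 0) := by
  refine tendsto_of_tendsto_of_tendsto_of_le_of_le' tendsto_const_nhds tendsto_phi_atTop ?_ ?_
  · filter_upwards [eventually_ge_atTop 0] with x hx
    have := (phi_pos x).le
    positivity
  · filter_upwards with x
    rw [div_le_iff₀ (by positivity)]
    nlinarith [phi_pos x, sq_nonneg (x - 1)]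

lemma mul_phi_div_lt_one_sub_Phi (x : ℝ) : x * phi x / (x ^ 2 + 1) < 1 - Phi x := by
  set M : ℝ → ℝ := fun y => y * phi y / (y ^ 2 + 1) - (1 - Phi y) with hM
  have hM' (y : ℝ) : HasDerivAt M (2 * phi y / (y ^ 2 + 1) ^ 2) y := by
    have hnum := (hasDerivAt_id y).mul (hasDerivAt_phi y)
    have hden := (hasDerivAt_pow 2 y).add_const 1
    refine ((hnum.div hden (by positivity)).sub
      ((hasDerivAt_const y 1).sub (hasDerivAt_Phi y))).congr_deriv ?_
    simp only [id_eq, Pi.mul_apply]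
    field_simp
    ring
  have hM_mono : StrictMono M :=
    strictMono_of_hasDerivAt_pos hM' fun y => by have := phi_pos y; positivity
  have hM_lim : Tendsto M atTop (𝓝 0) := by
    simpa using tendsto_mul_phi_div_atTop.sub (tendsto_Phi_atTop.const_sub 1)
  have : M x < 0 := (hM_mono (lt_add_one x)).trans_le (hM_mono.monotone.ge_of_tendsto hM_lim _)
  simpa [hM, sub_neg] using this

lemma mul_Haz_lt (x : ℝ) : x * Haz x < x ^ 2 + 1 := by
  have h := mul_phi_div_lt_one_sub_Phi x
  have hpos : 0 < 1 - Phi x := sub_pos.2 (Phi_lt_one x)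
  rw [div_lt_iff₀ (by positivity)] at h
  rw [Haz, ← mul_div_assoc, div_lt_iff₀ hpos]
  linarith

lemma strictAntiOn_Haz_div : StrictAntiOn (fun x => Haz x / x) (Ioi 0) := by
  have hderiv {x : ℝ} (hx : x ∈ Ioi 0) :
      HasDerivAt (fun x => Haz x / x) ((Haz x * (Haz x - x) * x - Haz x * 1) / x ^ 2) x :=
    (hasDerivAt_Haz x).div (hasDerivAt_id x) (ne_of_gt hx)
  refine strictAntiOn_of_hasDerivWithinAt_neg (convex_Ioi 0)
    (fun x hx => (hderiv hx).continuousAt.continuousWithinAt)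
    (fun x hx => (hderiv (interior_subset hx)).hasDerivWithinAt) fun x hx => ?_
  have hx : (0 : ℝ) < x := interior_subset hx
  refine div_neg_of_neg_of_pos ?_ (by positivity)
  nlinarith [mul_pos (Haz_pos x) (sub_pos.2 (mul_Haz_lt x))]

-- `c(α)/σ_α` in the paper's notation.
noncomputable def signalRatio (β α : ℝ) : ℝ := (α * β + (1 - α) * (1 - β)) / √(α ^ 2 + (1 - α) ^ 2)

lemma sq_add_one_sub_sq_pos (α : ℝ) : 0 < α ^ 2 + (1 - α) ^ 2 := by
  nlinarith [sq_nonneg (2 * α - 1)]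

lemma hasDerivAt_signalRatio (β α : ℝ) :
    HasDerivAt (signalRatio β) ((β - α) / √(α ^ 2 + (1 - α) ^ 2) ^ 3) α := by
  have hf : HasDerivAt (fun a : ℝ => a ^ 2 + (1 - a) ^ 2) (4 * α - 2) α := by
    refine ((hasDerivAt_pow 2 α).add ((hasDerivAt_id α).const_sub 1 |>.pow 2)).congr_deriv ?_
    simp only [Nat.cast_ofNat, Nat.add_one_sub_one, pow_one, id_eq, mul_neg, mul_one]
    ring
  have hc : HasDerivAt (fun a : ℝ => a * β + (1 - a) * (1 - β)) (2 * β - 1) α := by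
    refine (((hasDerivAt_id α).mul_const β).add
      (((hasDerivAt_id α).const_sub 1).mul_const (1 - β))).congr_deriv ?_
    ring
  have hpos := sq_add_one_sub_sq_pos α
  have hs : 0 < √(α ^ 2 + (1 - α) ^ 2) := sqrt_pos.2 hpos
  refine (hc.div (hf.sqrt hpos.ne') hs.ne').congr_deriv ?_
  field_simp
  rw [sq_sqrt hpos.le]
  ring

lemma strictMonoOn_signalRatio (β : ℝ) : StrictMonoOn (signalRatio β) (Iic β) := by
  refine strictMonoOn_of_hasDerivWithinAt_pos (convex_Iic β)
    (fun α _ => (hasDerivAt_signalRatio β α).continuousAt.continuousWithinAt)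
    (fun α _ => (hasDerivAt_signalRatio β α).hasDerivWithinAt) fun α hα => ?_
  rw [interior_Iic] at hα
  exact div_pos (sub_pos.2 hα) (pow_pos (sqrt_pos.2 (sq_add_one_sub_sq_pos α)) 3)

lemma strictAntiOn_signalRatio (β : ℝ) : StrictAntiOn (signalRatio β) (Ici β) := by
  refine strictAntiOn_of_hasDerivWithinAt_neg (convex_Ici β)
    (fun α _ => (hasDerivAt_signalRatio β α).continuousAt.continuousWithinAt)
    (fun α _ => (hasDerivAt_signalRatio β α).hasDerivWithinAt) fun α hα => ?_
  rw [interior_Ici] at hα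
  exact div_neg_of_neg_of_pos (sub_neg.2 hα) (pow_pos (sqrt_pos.2 (sq_add_one_sub_sq_pos α)) 3)

lemma signalRatio_pos {β α : ℝ} (hβ : β ∈ Ioo 0 1) (hα : α ∈ Icc 0 1) : 0 < signalRatio β α := by
  obtain ⟨hβ₀, hβ₁⟩ := hβ
  obtain ⟨hα₀, hα₁⟩ := hα
  refine div_pos ?_ (sqrt_pos.2 (sq_add_one_sub_sq_pos α))
  nlinarith [mul_nonneg hα₀ hβ₀.le, mul_nonneg (sub_nonneg.2 hα₁) (sub_nonneg.2 hβ₁.le)]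

lemma strictMonoOn_mul_Haz_div {τ : ℝ} (hτ : 0 < τ) :
    StrictMonoOn (fun r => r * Haz (τ / r)) (Ioi 0) := by
  have hr_eq {r : ℝ} (hr : 0 < r) : r * Haz (τ / r) = τ * (Haz (τ / r) / (τ / r)) := by
    field_simp
  intro r hr r' hr' h
  simp only [hr_eq hr, hr_eq hr']
  refine mul_lt_mul_of_pos_left (strictAntiOn_Haz_div ?_ ?_ (div_lt_div_of_pos_left hτ hr h)) hτ
  exacts [div_pos hτ (hr.trans h), div_pos hτ hr]

lemma strictMonoOn_one_sub_Phi_div {τ : ℝ} (hτ : 0 < τ) :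
    StrictMonoOn (fun r => 1 - Phi (τ / r)) (Ioi 0) := fun _ hr _ _ h =>
  sub_lt_sub_left (strictMono_Phi (div_lt_div_of_pos_left hτ hr h)) 1

lemma lt_of_strictMonoOn_Ioc_of_strictAntiOn_Ico {α β : Type*} [LinearOrder α] [Preorder β]
    {f : α → β} {a b m x : α} (hmono : StrictMonoOn f (Ioc a m)) (hanti : StrictAntiOn f (Ico m b))
    (hx : x ∈ Ioo a b) (hxm : x ≠ m) : f x < f m := by
  rcases hxm.lt_or_gt with h | h
  · exact hmono ⟨hx.1, h.le⟩ ⟨hx.1.trans h, le_rfl⟩ h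
  · exact hanti ⟨le_rfl, h.trans hx.2⟩ ⟨h.le, hx.2⟩ h

theorem stmt8 (β τQ : ℝ) (hβ : β ∈ Set.Ioo (0 : ℝ) 1) (hτ : 0 < τQ)
    (σα c q n : ℝ → ℝ)
    (hσα : ∀ α, σα α = Real.sqrt (α ^ 2 + (1 - α) ^ 2))
    (hc : ∀ α, c α = α * β + (1 - α) * (1 - β))
    (hq : ∀ α, q α = c α / σα α * Haz (τQ * σα α / c α))
    (hn : ∀ α, n α = 1 - Phi (τQ * σα α / c α)) :
    StrictMonoOn q (Set.Ioo 0 β) ∧ StrictAntiOn q (Set.Ioo β 1) ∧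
    StrictMonoOn n (Set.Ioo 0 β) ∧ StrictAntiOn n (Set.Ioo β 1) ∧
    (∀ α ∈ Set.Ioo (0 : ℝ) 1, α ≠ β → q α < q β ∧ n α < n β) := by
  have hq' : q = (fun r => r * Haz (τQ / r)) ∘ signalRatio β := by
    ext α
    simp only [hq, hc, hσα, Function.comp, signalRatio, div_div_eq_mul_div]
  have hn' : n = (fun r => 1 - Phi (τQ / r)) ∘ signalRatio β := by
    ext α
    simp only [hn, hc, hσα, Function.comp, signalRatio, div_div_eq_mul_div]
  have hpeak {F : ℝ → ℝ} (hF : StrictMonoOn F (Ioi 0)) :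
      StrictMonoOn (F ∘ signalRatio β) (Ioc 0 β) ∧ StrictAntiOn (F ∘ signalRatio β) (Ico β 1) :=
    ⟨hF.comp ((strictMonoOn_signalRatio β).mono Ioc_subset_Iic_self)
        fun α hα => signalRatio_pos hβ ⟨hα.1.le, hα.2.trans hβ.2.le⟩,
      hF.comp_strictAntiOn ((strictAntiOn_signalRatio β).mono Ico_subset_Ici_self)
        fun α hα => signalRatio_pos hβ ⟨hβ.1.le.trans hα.1, hα.2.le⟩⟩
  obtain ⟨hq_mono, hq_anti⟩ := hpeak (strictMonoOn_mul_Haz_div hτ)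
  obtain ⟨hn_mono, hn_anti⟩ := hpeak (strictMonoOn_one_sub_Phi_div hτ)
  rw [hq', hn']
  exact ⟨hq_mono.mono Ioo_subset_Ioc_self, hq_anti.mono Ioo_subset_Ico_self,
    hn_mono.mono Ioo_subset_Ioc_self, hn_anti.mono Ioo_subset_Ico_self, fun α hα hαβ =>
    ⟨lt_of_strictMonoOn_Ioc_of_strictAntiOn_Ico hq_mono hq_anti hα hαβ,
      lt_of_strictMonoOn_Ioc_of_strictAntiOn_Ico hn_mono hn_anti hα hαβ⟩⟩
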